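/- arXiv:math/0602541 — 2 statements merged into one kernel-verified Lean document; each statement's English description precedes it below -/
import Mathlib

section
/- Let k be a field of characteristic p > 0 that is infinite. Let S₀ be a finite subset of k, and let S = {s^(p^n) : s ∈ S₀, n ∈ ℕ}. Then k \ S is infinite. -/
/-!
Write `φ` for the Frobenius `x ↦ x ^ p`, so that `S` is the union of the forward `φ`-orbits of the
points of `S₀`. If `φ` is not surjective, its image is an infinite proper additive subgroup, so
its complement is infinite; a non-`p`-th power lies in `S` only if it lies in `S₀`.
If `φ` is bijective and all forward orbits are finite, `S` is finite. Otherwise some `s` has an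
infinite forward orbit, so its backward orbit `s, φ⁻¹ s, φ⁻² s, …` is injective, and `φ⁻ⁿ s`
can lie in the forward orbit of `t ∈ S₀` only if `t = φ⁻ʲ s` for some `j ≥ n`; as only finitely
many `j` occur, the tail of the backward orbit avoids `S`.
-/

open Function Set

theorem Function.IsPeriodicPt.finite_range_iterate {X : Type*} {f : X → X} {x : X} {n : ℕ}
    (h : IsPeriodicPt f n x) (hn : 0 < n) : (range fun m => f^[m] x).Finite := by
  refine ((finite_Iio n).image fun m => f^[m] x).subset ?_
  rintro _ ⟨m, rfl⟩
  exact ⟨m % n, Nat.mod_lt m hn, h.iterate_mod_apply m⟩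

section ForwardOrbits

variable {X : Type*} (f : X → X)

def forwardOrbits (S₀ : Set X) : Set X := {x | ∃ s ∈ S₀, ∃ n : ℕ, x = f^[n] s}

variable {f}

theorem forwardOrbits_eq_biUnion (S₀ : Set X) :
    forwardOrbits f S₀ = ⋃ s ∈ S₀, range fun n => f^[n] s := by
  ext x
  simp only [forwardOrbits, mem_ofPred_eq, mem_iUnion, mem_range, exists_prop, eq_comm]

theorem compl_range_diff_subset_compl_forwardOrbits (S₀ : Set X) :
    (range f)ᶜ \ S₀ ⊆ (forwardOrbits f S₀)ᶜ := by
  rintro x ⟨hx_range, hx_S₀⟩ ⟨s, hs, n, rfl⟩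
  cases n with
  | zero => exact hx_S₀ hs
  | succ n => exact hx_range ⟨f^[n] s, (iterate_succ_apply' f n s).symm⟩

theorem infinite_compl_forwardOrbits_of_infinite_compl_range {S₀ : Set X} (hS₀ : S₀.Finite)
    (hf : (range f)ᶜ.Infinite) : (forwardOrbits f S₀)ᶜ.Infinite :=
  (hf.sdiff hS₀).mono (compl_range_diff_subset_compl_forwardOrbits S₀)

theorem infinite_compl_forwardOrbits_of_infinite_orbit (hf : Bijective f) {S₀ : Set X}
    (hS₀ : S₀.Finite) {s : X} (hinf : (range fun n => f^[n] s).Infinite) :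
    (forwardOrbits f S₀)ᶜ.Infinite := by
  set g := surjInv hf.2
  have hg : RightInverse g f := rightInverse_surjInv hf.2
  set y : ℕ → X := fun n => g^[n] s
  have hfy : ∀ m n, f^[m] (y (m + n)) = y n := fun m n => by
    simp only [y, iterate_add_apply, (hg.iterate m) _]
  have hys : ∀ n, f^[n] (y n) = s := fun n => hfy n 0
  have hy : Injective y := by
    refine Injective.of_lt_imp_ne fun a b hab hyab => hinf ?_
    obtain ⟨d, rfl⟩ := Nat.exists_eq_add_of_lt hab
    have hper : IsPeriodicPt f (d + 1) s := calc
      f^[d + 1] s = f^[d + 1] (f^[a] (y a)) := by rw [hys a]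
      _ = f^[a + d + 1] (y (a + d + 1)) := by
        rw [← iterate_add_apply, hyab, show d + 1 + a = a + d + 1 by omega]
      _ = s := hys _
    exact hper.finite_range_iterate d.succ_pos
  have hback : ∀ n, y n ∈ forwardOrbits f S₀ → ∃ j ∈ y ⁻¹' S₀, n ≤ j := by
    rintro n ⟨t, ht, m, htm⟩
    refine ⟨m + n, ?_, Nat.le_add_left n m⟩
    rw [mem_preimage, hf.1.iterate m ((hfy m n).trans htm)]
    exact ht
  obtain ⟨N, hN⟩ := (hS₀.preimage hy.injOn).bddAbove
  refine infinite_of_injective_forall_mem (f := fun n => y (n + N + 1))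
    (fun a b hab => by simpa using hy hab) fun n hn => ?_
  obtain ⟨j, hj, hnj⟩ := hback _ hn
  have := hN hj
  omega

theorem infinite_compl_forwardOrbits_of_bijective [Infinite X] (hf : Bijective f) {S₀ : Set X}
    (hS₀ : S₀.Finite) : (forwardOrbits f S₀)ᶜ.Infinite := by
  by_cases h : ∃ s, (range fun n => f^[n] s).Infinite
  · obtain ⟨s, hinf⟩ := h
    exact infinite_compl_forwardOrbits_of_infinite_orbit hf hS₀ hinf
  · push Not at h
    rw [forwardOrbits_eq_biUnion]
    exact (hS₀.biUnion fun s _ => h s).infinite_compl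

end ForwardOrbits

theorem AddMonoidHom.infinite_compl_range {G H : Type*} [AddGroup G] [AddGroup H] [Infinite G]
    (φ : G →+ H) (hinj : Injective φ) (hsurj : ¬Surjective φ) : (Set.range φ)ᶜ.Infinite := by
  obtain ⟨a, ha⟩ := not_forall.mp hsurj
  refine infinite_of_injective_forall_mem (f := fun x => a + φ x)
    (fun x y hxy => hinj (add_left_cancel hxy)) fun x ⟨z, hz⟩ => ha ⟨z - x, ?_⟩
  rw [map_sub, hz, add_sub_cancel_right]

/-- Let `k` be an infinite field of characteristic `p > 0`, `S₀` a finite subset of `k`,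
and `S = {s^(p^n) : s ∈ S₀, n ∈ ℕ}`. Then `k \ S` is infinite. -/
theorem stmt_0 {k : Type*} [Field k] [Infinite k] (p : ℕ) (hp : p.Prime) [CharP k p]
    (S₀ : Finset k) (S : Set k) (hS : S = {x : k | ∃ s ∈ S₀, ∃ n : ℕ, x = s ^ p ^ n}) :
    (Sᶜ).Infinite := by
  have : Fact p.Prime := ⟨hp⟩
  have hS_orbits : S = forwardOrbits (frobenius k p) S₀ := by
    simp only [hS, forwardOrbits, iterate_frobenius, Finset.mem_coe]
  rw [hS_orbits]
  by_cases hsurj : Surjective (frobenius k p)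
  · exact infinite_compl_forwardOrbits_of_bijective ⟨frobenius_inj k p, hsurj⟩ S₀.finite_toSet
  · exact infinite_compl_forwardOrbits_of_infinite_compl_range S₀.finite_toSet
      ((frobenius k p).toAddMonoidHom.infinite_compl_range (frobenius_inj k p) hsurj)
end

section
/- Let K be a field of characteristic different from 2, q a quadratic form over K, and L a purely inseparable field extension of K. If q has a nontrivial zero over L, then q has a nontrivial zero over K. -/
open MvPolynomial Finset

private lemma finsupp_exists_ne_zero {σ : Type*} {d : σ →₀ ℕ} (h : d.degree ≠ 0) :
    ∃ i, d i ≠ 0 := by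
  by_contra hc
  push_neg at hc
  exact h (by rw [Finsupp.degree_eq_zero_iff]; ext i; simp [hc i])

private lemma finsupp_degree_add {σ : Type*} (a b : σ →₀ ℕ) :
    (a + b).degree = a.degree + b.degree := by
  simp only [Finsupp.degree_eq_weight_one, map_add]

private lemma finsupp_degree_single {σ : Type*} (i : σ) :
    (Finsupp.single i 1).degree = 1 := by
  classical
  rw [Finsupp.degree_apply, Finsupp.support_single_ne_zero _ one_ne_zero]
  simp

private lemma finsupp_split {σ : Type*} [DecidableEq σ] {d : σ →₀ ℕ} {i : σ} (hi : d i ≠ 0) :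
    ∃ e : σ →₀ ℕ, d = Finsupp.single i 1 + e ∧ e.degree + 1 = d.degree := by
  have hd : d = Finsupp.single i 1 + (d - Finsupp.single i 1) := by
    ext k
    simp only [Finsupp.add_apply, Finsupp.tsub_apply, Finsupp.single_apply]
    split_ifs with hik
    · subst hik; omega
    · omega
  refine ⟨d - Finsupp.single i 1, hd, ?_⟩
  conv_rhs => rw [hd]
  rw [finsupp_degree_add, finsupp_degree_single]
  omega

private lemma finsupp_degree_two {σ : Type*} [DecidableEq σ] (d : σ →₀ ℕ)
    (h : d.degree = 2) :
    ∃ i j, d = Finsupp.single i 1 + Finsupp.single j 1 := by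
  obtain ⟨i, hi⟩ := finsupp_exists_ne_zero (σ := σ) (d := d) (by omega)
  obtain ⟨e, he, hed⟩ := finsupp_split hi
  obtain ⟨j, hj⟩ := finsupp_exists_ne_zero (σ := σ) (d := e) (by omega)
  obtain ⟨e', he', hed'⟩ := finsupp_split hj
  have he'0 : e' = 0 := by
    rw [← Finsupp.degree_eq_zero_iff]
    omega
  exact ⟨i, j, by rw [he, he', he'0, add_zero]⟩

private lemma single_add_single_eq {σ : Type*} [DecidableEq σ] {i j i₀ j₀ : σ}
    (h : Finsupp.single i 1 + Finsupp.single j 1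
       = Finsupp.single i₀ 1 + Finsupp.single j₀ (1 : ℕ)) :
    (i = i₀ ∧ j = j₀) ∨ (i = j₀ ∧ j = i₀) := by
  by_cases hii : i = i₀
  · subst hii
    exact Or.inl ⟨rfl, (Finsupp.single_left_inj one_ne_zero).1 (add_left_cancel h)⟩
  · have hval := Finsupp.ext_iff.1 h i₀
    simp only [Finsupp.add_apply, Finsupp.single_apply] at hval
    have hji : j = i₀ := by
      by_contra hji
      rw [if_neg hii, if_neg hji] at hval
      split_ifs at hval <;> omega
    subst hji
    have h' : Finsupp.single j 1 + Finsupp.single i 1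
        = Finsupp.single j 1 + Finsupp.single j₀ (1:ℕ) := by
      rw [add_comm] at h; rw [h, add_comm]
    exact Or.inr ⟨(Finsupp.single_left_inj one_ne_zero).1 (add_left_cancel h'), rfl⟩

private lemma rep_quadratic {K : Type*} [Field K] (h2 : (2 : K) ≠ 0) {n : ℕ}
    (q : MvPolynomial (Fin n) K) (hq : q.IsHomogeneous 2) :
    ∃ a : Fin n → Fin n → K, (∀ i j, a i j = a j i) ∧
      q = ∑ i : Fin n, ∑ j : Fin n, (C (a i j) * X i * X j) := by
  classical
  set a : Fin n → Fin n → K := fun i j =>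
    coeff (Finsupp.single i 1 + Finsupp.single j 1) q * (if i = j then 1 else 2⁻¹) with ha
  have hsymm : ∀ i j, a i j = a j i := by
    intro i j
    simp only [ha]
    rw [add_comm]
    congr 1
    by_cases h : i = j
    · rw [if_pos h, if_pos h.symm]
    · rw [if_neg h, if_neg (fun hc => h hc.symm)]
  refine ⟨a, hsymm, ?_⟩
  have hmono : ∀ (c : K) (i j : Fin n), C c * X i * X j
      = monomial (Finsupp.single i 1 + Finsupp.single j 1) c := by
    intro c i j
    rw [MvPolynomial.X, MvPolynomial.X, MvPolynomial.C_apply, monomial_mul, monomial_mul]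
    simp
  apply MvPolynomial.ext
  intro d
  rw [MvPolynomial.coeff_sum]
  simp_rw [MvPolynomial.coeff_sum, hmono, MvPolynomial.coeff_monomial]
  by_cases hdec : ∃ i j, d = Finsupp.single i 1 + Finsupp.single j 1
  · obtain ⟨i₀, j₀, hd⟩ := hdec
    by_cases hij : i₀ = j₀
    · subst hij
      rw [Finset.sum_eq_single i₀]
      · rw [Finset.sum_eq_single i₀]
        · rw [if_pos hd.symm, ha]
          simp [← hd]
        · intro j _ hj
          apply if_neg
          intro hc
          rcases single_add_single_eq (hc.trans hd) with ⟨_, hB⟩ | ⟨_, hB⟩ <;> exact hj hB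
        · intro hc; exact absurd (Finset.mem_univ i₀) hc
      · intro i _ hi
        apply Finset.sum_eq_zero
        intro j _
        apply if_neg
        intro hc
        rcases single_add_single_eq (hc.trans hd) with ⟨hA, _⟩ | ⟨hA, _⟩ <;> exact hi hA
      · intro hc; exact absurd (Finset.mem_univ i₀) hc
    · have hin : ∀ i : Fin n, (∑ j : Fin n,
          if Finsupp.single i 1 + Finsupp.single j 1 = d then a i j else 0)
          = (if i = i₀ then a i₀ j₀ else 0) + (if i = j₀ then a j₀ i₀ else 0) := by
        intro i
        by_cases h1 : i = i₀
        · subst h1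
          rw [if_pos rfl, if_neg hij, add_zero]
          rw [Finset.sum_eq_single j₀]
          · rw [if_pos hd.symm]
          · intro j _ hj
            apply if_neg
            intro hc
            rcases single_add_single_eq (hc.trans hd) with ⟨_, hB⟩ | ⟨hA, _⟩
            · exact hj hB
            · exact hij hA
          · intro hc; exact absurd (Finset.mem_univ j₀) hc
        · by_cases h2 : i = j₀
          · subst h2
            rw [if_neg h1, if_pos rfl, zero_add]
            rw [Finset.sum_eq_single i₀]
            · apply if_pos
              rw [add_comm]
              exact hd.symm
            · intro j _ hj
              apply if_neg
              intro hc
              rcases single_add_single_eq (hc.trans hd) with ⟨hA, _⟩ | ⟨_, hB⟩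
              · exact hij hA.symm
              · exact hj hB
            · intro hc; exact absurd (Finset.mem_univ i₀) hc
          · rw [if_neg h1, if_neg h2, add_zero]
            apply Finset.sum_eq_zero
            intro j _
            apply if_neg
            intro hc
            rcases single_add_single_eq (hc.trans hd) with ⟨hA, _⟩ | ⟨hA, _⟩
            · exact h1 hA
            · exact h2 hA
      rw [Finset.sum_congr rfl fun i _ => hin i, Finset.sum_add_distrib,
        Finset.sum_ite_eq' Finset.univ i₀ fun _ => a i₀ j₀,
        Finset.sum_ite_eq' Finset.univ j₀ fun _ => a j₀ i₀,
        if_pos (Finset.mem_univ i₀), if_pos (Finset.mem_univ j₀)]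
      have hval : a i₀ j₀ + a j₀ i₀ = coeff d q * 2⁻¹ + coeff d q * 2⁻¹ := by
        rw [ha]
        simp only [if_neg hij, if_neg (fun hc : j₀ = i₀ => hij hc.symm)]
        rw [← hd, add_comm (Finsupp.single j₀ 1), ← hd]
      rw [hval, ← mul_add,
        show (2:K)⁻¹ + 2⁻¹ = 1 from by rw [← two_mul, mul_inv_cancel₀ h2], mul_one]
  · rw [hq.coeff_eq_zero (d := d) ?_]
    · symm
      apply Finset.sum_eq_zero
      intro i _
      apply Finset.sum_eq_zero
      intro j _
      rw [if_neg (fun hc => hdec ⟨i, j, hc.symm⟩)]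
    · intro hc
      exact hdec (finsupp_degree_two d hc)

private lemma pi_expand {K : Type*} [Semiring K] {N : ℕ} (v : Fin N → K) :
    v = ∑ k, v k • (Pi.single k (1 : K) : Fin N → K) := by
  ext r
  rw [Finset.sum_apply, Finset.sum_eq_single r]
  · simp
  · intro k _ hk; simp [Pi.single_apply, hk]
  · intro hc; exact absurd (Finset.mem_univ r) hc

/-- Let `K` be a field of characteristic `≠ 2`, `q` a quadratic form over `K`, and `L` a
purely inseparable extension of `K`. If `q` has a nontrivial zero over `L`, then `q` has a
nontrivial zero over `K`. -/
theorem stmt_4 {K L : Type*} [Field K] [Field L] [Algebra K L] [IsPurelyInseparable K L]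
    (h2 : ringChar K ≠ 2) (n : ℕ) (q : MvPolynomial (Fin n) K)
    (hq : q.IsHomogeneous 2)
    (hL : ∃ x : Fin n → L, x ≠ 0 ∧ MvPolynomial.aeval x q = 0) :
    ∃ x : Fin n → K, x ≠ 0 ∧ MvPolynomial.eval x q = 0 := by
  classical
  obtain ⟨x, hx0, hxq⟩ := hL
  have h2K : (2 : K) ≠ 0 := by
    intro h20
    have hdvd : ringChar K ∣ 2 := ringChar.dvd (by exact_mod_cast h20)
    rcases (Nat.dvd_prime Nat.prime_two).1 hdvd with h1 | h1
    · exact CharP.ringChar_ne_one (R := K) h1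
    · exact h2 h1
  obtain ⟨a, hsymm, hrep⟩ := rep_quadratic h2K q hq
  haveI : Invertible (2 : K) := invertibleOfNonzero h2K
  -- the quadratic form associated to `q`
  let B : LinearMap.BilinMap K (Fin n → K) K := LinearMap.mk₂ K
    (fun u v => ∑ i, ∑ j, a i j * u i * v j)
    (fun m₁ m₂ v => by
      rw [← Finset.sum_add_distrib]
      refine Finset.sum_congr rfl fun i _ => ?_
      rw [← Finset.sum_add_distrib]
      exact Finset.sum_congr rfl fun j _ => by simp only [Pi.add_apply]; ring)
    (fun c m v => by
      simp only [smul_eq_mul, Pi.smul_apply, Finset.mul_sum]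
      exact Finset.sum_congr rfl fun i _ => Finset.sum_congr rfl fun j _ => by ring)
    (fun m v₁ v₂ => by
      rw [← Finset.sum_add_distrib]
      refine Finset.sum_congr rfl fun i _ => ?_
      rw [← Finset.sum_add_distrib]
      exact Finset.sum_congr rfl fun j _ => by simp only [Pi.add_apply]; ring)
    (fun c m v => by
      simp only [smul_eq_mul, Pi.smul_apply, Finset.mul_sum]
      exact Finset.sum_congr rfl fun i _ => Finset.sum_congr rfl fun j _ => by ring)
  have hB : ∀ u v, B u v = ∑ i, ∑ j, a i j * u i * v j := fun u v => rfl
  let Q : QuadraticForm K (Fin n → K) := B.toQuadraticMap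
  have hQB : ∀ v : Fin n → K, Q v = B v v := fun v => rfl
  have hQeval : ∀ v : Fin n → K, MvPolynomial.eval v q = Q v := by
    intro v
    rw [hQB, hB, hrep]
    simp [MvPolynomial.eval_sum]
  obtain ⟨w, ⟨f⟩⟩ := QuadraticForm.equivalent_weightedSumSquares Q
  have key : ∀ v : Fin n → K, (∑ k, w k * (f v k * f v k)) = Q v := by
    intro v
    have h := f.map_app v
    rw [QuadraticMap.weightedSumSquares_apply] at h
    simpa [smul_eq_mul] using h
  -- matrix entries of f and its inverse
  let T : Fin (Module.finrank K (Fin n → K)) → Fin n → K :=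
    fun k i => f (Pi.single i 1) k
  let S : Fin n → Fin (Module.finrank K (Fin n → K)) → K :=
    fun i k => f.symm (Pi.single k 1) i
  have hBe : ∀ i j, B (Pi.single i 1) (Pi.single j 1) = a i j := by
    intro i j
    rw [hB]
    rw [Finset.sum_eq_single i]
    · rw [Finset.sum_eq_single j]
      · simp
      · intro j' _ hj'; simp [Pi.single_apply, hj']
      · intro hc; exact absurd (Finset.mem_univ j) hc
    · intro i' _ hi'
      apply Finset.sum_eq_zero
      intro j' _
      simp [Pi.single_apply, hi']
    · intro hc; exact absurd (Finset.mem_univ i) hc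
  -- the congruence identity over K
  have hTw : ∀ i j, (∑ k, w k * (T k i * T k j)) = a i j := by
    intro i j
    have h1 := key (Pi.single i 1)
    have h2' := key (Pi.single j 1)
    have h3 := key (Pi.single i 1 + Pi.single j 1)
    have hfadd : ∀ k, f (Pi.single i 1 + Pi.single j 1) k = T k i + T k j := by
      intro k
      rw [map_add f (Pi.single i 1) (Pi.single j 1), Pi.add_apply]
    have hq3 : Q (Pi.single i 1 + Pi.single j 1)
        = a i i + a j j + (a i j + a i j) := by
      rw [hQB]
      simp only [map_add, LinearMap.add_apply]
      rw [hBe, hBe, hBe, hBe, hsymm j i]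
      ring
    have hexp : ∑ k, w k * (f (Pi.single i 1 + Pi.single j 1) k
        * f (Pi.single i 1 + Pi.single j 1) k)
        = (∑ k, w k * (T k i * T k i)) + (∑ k, w k * (T k j * T k j))
          + (2 * ∑ k, w k * (T k i * T k j)) := by
      rw [Finset.mul_sum, ← Finset.sum_add_distrib, ← Finset.sum_add_distrib]
      refine Finset.sum_congr rfl fun k _ => ?_
      rw [hfadd k]
      ring
    have hQ1 : Q (Pi.single i 1) = a i i := by rw [hQB, hBe]
    have hQ2 : Q (Pi.single j 1) = a j j := by rw [hQB, hBe]
    rw [hexp, h1, h2', hq3, hQ1, hQ2] at h3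
    have h2sum : 2 * (∑ k, w k * (T k i * T k j)) = 2 * a i j := by
      linear_combination h3
    exact mul_left_cancel₀ h2K h2sum
  -- inverse identity
  have hST : ∀ i j, (∑ k, T k j * S i k) = if i = j then 1 else 0 := by
    intro i j
    have h1 : f.symm (f (Pi.single j 1)) = Pi.single j 1 :=
      f.toLinearEquiv.symm_apply_apply _
    have h2' : f.symm (f (Pi.single j 1)) i = ∑ k, T k j * S i k := by
      have e1 : (f (Pi.single j 1) : Fin (Module.finrank K (Fin n → K)) → K)
          = ∑ k, T k j • (Pi.single k (1 : K) : Fin (Module.finrank K (Fin n → K)) → K) := pi_expand _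
      rw [e1, map_sum, Finset.sum_apply]
      refine Finset.sum_congr rfl fun k _ => ?_
      rw [map_smul, Pi.smul_apply, smul_eq_mul]
    rw [← h2', h1, Pi.single_apply]
  -- base change to L
  set φ := algebraMap K L with hφ
  have heval : ∑ i, ∑ j, φ (a i j) * (x i * x j) = 0 := by
    rw [hrep, map_sum] at hxq
    simp only [map_sum, map_mul, aeval_C, aeval_X] at hxq
    rw [← hxq]
    exact Finset.sum_congr rfl fun i _ => Finset.sum_congr rfl fun j _ => by ring
  let z : Fin (Module.finrank K (Fin n → K)) → L := fun k => ∑ i, φ (T k i) * x i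
  have hzdef : ∀ k, z k = ∑ i, φ (T k i) * x i := fun k => rfl
  have hTwL : ∀ i j, (∑ k, φ (w k) * (φ (T k i) * φ (T k j))) = φ (a i j) := by
    intro i j
    rw [← hTw i j, map_sum]
    exact Finset.sum_congr rfl fun k _ => by rw [map_mul, map_mul]
  have hzsum : ∑ k, φ (w k) * (z k * z k) = 0 := by
    have step1 : ∀ k, φ (w k) * (z k * z k)
        = ∑ i, ∑ j, (φ (w k) * (φ (T k i) * φ (T k j))) * (x i * x j) := by
      intro k
      rw [hzdef, Finset.sum_mul_sum, Finset.mul_sum]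
      refine Finset.sum_congr rfl fun i _ => ?_
      rw [Finset.mul_sum]
      exact Finset.sum_congr rfl fun j _ => by ring
    calc ∑ k, φ (w k) * (z k * z k)
        = ∑ k, ∑ i, ∑ j, (φ (w k) * (φ (T k i) * φ (T k j))) * (x i * x j) :=
          Finset.sum_congr rfl fun k _ => step1 k
      _ = ∑ i, ∑ k, ∑ j, (φ (w k) * (φ (T k i) * φ (T k j))) * (x i * x j) :=
          Finset.sum_comm
      _ = ∑ i, ∑ j, ∑ k, (φ (w k) * (φ (T k i) * φ (T k j))) * (x i * x j) :=
          Finset.sum_congr rfl fun i _ => Finset.sum_comm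
      _ = ∑ i, ∑ j, φ (a i j) * (x i * x j) := by
          refine Finset.sum_congr rfl fun i _ => Finset.sum_congr rfl fun j _ => ?_
          rw [← Finset.sum_mul, hTwL i j]
      _ = 0 := heval
  have hzne : z ≠ 0 := by
    intro hz0
    apply hx0
    ext i
    have hxi : x i = ∑ k, φ (S i k) * z k := by
      calc x i = ∑ j, (if i = j then (1:L) else 0) * x j := by
            rw [Finset.sum_congr rfl fun j (_ : j ∈ Finset.univ) =>
              (by split_ifs with h <;> simp [h] : (if i = j then (1:L) else 0) * x j
                = if i = j then x j else 0)]
            rw [Finset.sum_ite_eq Finset.univ i x, if_pos (Finset.mem_univ i)]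
        _ = ∑ j, φ (∑ k, T k j * S i k) * x j := by
            refine Finset.sum_congr rfl fun j _ => ?_
            rw [hST i j]
            split_ifs <;> simp
        _ = ∑ j, ∑ k, (φ (S i k) * φ (T k j)) * x j := by
            refine Finset.sum_congr rfl fun j _ => ?_
            rw [map_sum, Finset.sum_mul]
            exact Finset.sum_congr rfl fun k _ => by rw [map_mul]; ring
        _ = ∑ k, ∑ j, (φ (S i k) * φ (T k j)) * x j := Finset.sum_comm
        _ = ∑ k, φ (S i k) * z k := by
            refine Finset.sum_congr rfl fun k _ => ?_
            rw [hzdef, Finset.mul_sum]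
            exact Finset.sum_congr rfl fun j _ => by ring
    rw [hxi, hz0]
    simp
  -- finishing lemma over K
  have hfinish : ∀ y : Fin (Module.finrank K (Fin n → K)) → K, y ≠ 0 →
      (∑ k, w k * (y k * y k)) = 0 →
      ∃ u : Fin n → K, u ≠ 0 ∧ MvPolynomial.eval u q = 0 := by
    intro y hy hysum
    refine ⟨f.symm y, ?_, ?_⟩
    · intro h0
      apply hy
      have hy' : y = f (f.symm y) := (f.toLinearEquiv.apply_symm_apply y).symm
      rw [hy', show (f.symm y : Fin n → K) = 0 from h0, map_zero]
    · rw [hQeval, ← key]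
      have hfy : (f (f.symm y) : Fin (Module.finrank K (Fin n → K)) → K) = y :=
        f.toLinearEquiv.apply_symm_apply y
      rw [hfy]
      exact hysum
  by_cases hw : ∃ k, w k = 0
  · obtain ⟨k0, hk0⟩ := hw
    refine hfinish (Pi.single k0 1) ?_ ?_
    · intro hc
      have := congrFun hc k0
      simp at this
    · rw [Finset.sum_eq_single k0]
      · simp [hk0]
      · intro k _ hk; simp [Pi.single_apply, hk]
      · intro hc; exact absurd (Finset.mem_univ k0) hc
  · push_neg at hw
    haveI : ExpChar K (ringExpChar K) := ringExpChar.expChar K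
    haveI : ExpChar L (ringExpChar K) :=
      expChar_of_injective_algebraMap (algebraMap K L).injective (ringExpChar K)
    have hmem : ∀ k, ∃ m : ℕ, z k ^ ringExpChar K ^ m ∈ (algebraMap K L).range :=
      fun k => IsPurelyInseparable.pow_mem K (ringExpChar K) (z k)
    choose m hm using hmem
    set M := Finset.univ.sup m with hM
    have hmemM : ∀ k, ∃ c : K, φ c = z k ^ ringExpChar K ^ M := by
      intro k
      obtain ⟨b, hb⟩ := hm k
      refine ⟨b ^ ringExpChar K ^ (M - m k), ?_⟩
      rw [map_pow, hb, ← pow_mul, ← pow_add]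
      congr 1
      congr 1
      exact Nat.add_sub_cancel' (Finset.le_sup (Finset.mem_univ k))
    choose c hc using hmemM
    have hchar2 : ringExpChar K ≠ 2 := by
      intro hcon
      apply h2
      have h1 : ringExpChar K = max (ringChar K) 1 := rfl
      omega
    have hodd : Odd (ringExpChar K ^ M) := by
      rcases expChar_is_prime_or_one K (ringExpChar K) with hp | hp
      · exact (hp.odd_of_ne_two hchar2).pow
      · rw [hp, one_pow]; exact odd_one
    have hKsum : ∑ k, w k ^ ringExpChar K ^ M * (c k * c k) = 0 := by
      apply (algebraMap K L).injective
      rw [map_sum, map_zero]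
      have hterm : ∀ k, φ (w k ^ ringExpChar K ^ M * (c k * c k))
          = (φ (w k) * (z k * z k)) ^ ringExpChar K ^ M := by
        intro k
        rw [map_mul, map_mul, map_pow, hc k, mul_pow, mul_pow]
      rw [Finset.sum_congr rfl fun k _ => hterm k,
        ← sum_pow_char_pow (p := ringExpChar K) (n := M) Finset.univ
          (fun k => φ (w k) * (z k * z k)), hzsum]
      exact zero_pow (pow_ne_zero M (expChar_pos K (ringExpChar K)).ne')
    obtain ⟨r, hr⟩ := hodd
    refine hfinish (fun k => w k ^ r * c k) ?_ ?_
    · obtain ⟨k, hk⟩ := Function.ne_iff.1 hzne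
      have hck : c k ≠ 0 := by
        intro hc0
        apply pow_ne_zero (ringExpChar K ^ M) hk
        rw [← hc k, hc0, map_zero]
      intro hy0
      have hyk := congrFun hy0 k
      simp only [Pi.zero_apply] at hyk
      rcases mul_eq_zero.1 hyk with h | h
      · exact pow_ne_zero r (hw k) h
      · exact hck h
    · rw [← hKsum]
      refine Finset.sum_congr rfl fun k _ => ?_
      rw [hr]
      ring
end
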